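/- arXiv:2010.02681 — 2 statements merged into one kernel-verified Lean document; each statement's English description precedes it below -/
import Mathlib

section
/- Harmonic-decay bound (Proposition 1, part 1, with the additive correction needed to make it precise): for every real b > 0 and all integers n ≥ 1 and r ≥ 1, Σ_{i=1}^{r} (n/i)/(b + n/i)² ≤ (n/b²)·log( (n + (r+1)b)/n ) + 1/(2b). -/
/-!
The sum is telescoped against the potential `Φ(t) = (n/b²) log(bt + n) - 1/(2bt)`
(`decayPotential b n`): for every `t > 0` the summand `nt/(bt + n)²` at `t` is at most
`Φ(t + 1) - Φ(t)`. The logarithmic part of the increment is bounded below by the log-mean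
inequality `log(c/a) ≥ 2(c - a)/(c + a)`, and the remaining deficit is covered by
`1/(2bt) - 1/(2b(t + 1))`, whose sum over `t ≥ 1` is the additive correction `1/(2b)`.
-/

open Real Finset

lemma two_mul_sub_div_add_le_log_div {a c : ℝ} (ha : 0 < a) (hac : a ≤ c) :
    2 * (c - a) / (c + a) ≤ log (c / a) := by
  have hca : 0 < c + a := by linarith
  have key := sum_range_le_log_div (x := (c - a) / (c + a))
    (div_nonneg (by linarith) hca.le) ((div_lt_one hca).2 (by linarith)) 1
  have hratio : (1 + (c - a) / (c + a)) / (1 - (c - a) / (c + a)) = c / a := by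
    rw [one_add_div hca.ne', one_sub_div hca.ne', div_div_div_cancel_right₀ hca.ne',
      div_eq_div_iff (by ring_nf; positivity) ha.ne']
    ring
  rw [hratio, sum_range_one] at key
  norm_num at key
  linarith [show 2 * (c - a) / (c + a) = 2 * ((c - a) / (c + a)) by ring]

noncomputable def decayPotential (b n t : ℝ) : ℝ :=
  n / b ^ 2 * log (b * t + n) - 1 / (2 * b * t)

section

variable {b n t : ℝ}

lemma summand_le_decayPotential_sub (hb : 0 < b) (hn : 0 ≤ n) (ht : 0 < t) :
    (n / t) / (b + n / t) ^ 2 ≤ decayPotential b n (t + 1) - decayPotential b n t := by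
  set A := b * t + n with hA_def
  have hA : 0 < A := by positivity
  have hlog : 2 * b / (2 * A + b) ≤ log (b * (t + 1) + n) - log A := by
    rw [← log_div (by positivity) hA.ne']
    convert two_mul_sub_div_add_le_log_div hA (by linarith : A ≤ A + b) using 2 <;> ring
  have hQ : 0 ≤ A * (2 * A + b) - 2 * n * t * (t + 1) * (b - 2 * n) := by
    have expand : A * (2 * A + b) - 2 * n * t * (t + 1) * (b - 2 * n)
        = t ^ 2 * ((b - n) ^ 2 + b ^ 2 + 3 * n ^ 2) + 2 * b * t * n + b ^ 2 * t + 2 * n ^ 2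
          + b * n + 4 * n ^ 2 * t := by
      rw [hA_def]; ring
    rw [expand]; positivity
  -- cleared of denominators, the gap is `b * (A * Q + 2 * b * n ^ 2 * t * (t + 1))`, `Q` as in `hQ`
  have hpoly : n * t / A ^ 2 ≤ 2 * n / (b * (2 * A + b)) + 1 / (2 * b * t * (t + 1)) := by
    rw [div_add_div _ _ (by positivity) (by positivity),
      div_le_div_iff₀ (by positivity) (by positivity)]
    nlinarith [mul_nonneg hb.le (mul_nonneg hA.le hQ),
      mul_nonneg (mul_nonneg (mul_nonneg hb.le hb.le) (mul_nonneg hn hn))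
        (mul_nonneg ht.le (by positivity : (0 : ℝ) ≤ t + 1))]
  calc (n / t) / (b + n / t) ^ 2 = n * t / A ^ 2 := by rw [hA_def]; field_simp
    _ ≤ 2 * n / (b * (2 * A + b)) + 1 / (2 * b * t * (t + 1)) := hpoly
    _ = n / b ^ 2 * (2 * b / (2 * A + b)) + (1 / (2 * b * t) - 1 / (2 * b * (t + 1))) := by
      field_simp; ring
    _ ≤ n / b ^ 2 * (log (b * (t + 1) + n) - log A)
        + (1 / (2 * b * t) - 1 / (2 * b * (t + 1))) := by gcongr
    _ = decayPotential b n (t + 1) - decayPotential b n t := by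
      simp only [decayPotential, hA_def]; ring

lemma decayPotential_sub_decayPotential_one_le (hb : 0 < b) (hn : 0 < n) (ht : 0 < t) :
    decayPotential b n t - decayPotential b n 1
      ≤ n / b ^ 2 * log ((n + t * b) / n) + 1 / (2 * b) := by
  have hlog : log (b * t + n) - log (b + n) ≤ log ((n + t * b) / n) := by
    rw [log_div (by positivity) hn.ne', add_comm n, mul_comm t]
    linarith [log_le_log hn (by linarith : n ≤ b + n)]
  have htail : 0 ≤ 1 / (2 * b * t) := by positivity
  simp only [decayPotential, mul_one]
  linarith [mul_le_mul_of_nonneg_left hlog (by positivity : 0 ≤ n / b ^ 2)]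

end

/-- Harmonic-decay bound (Proposition 1, part 1, with additive correction):
for every `b > 0` and integers `n, r ≥ 1`,
`∑_{i=1}^{r} (n/i)/(b + n/i)² ≤ (n/b²)·log((n + (r+1)b)/n) + 1/(2b)`. -/
theorem harmonic_decay_bound (b : ℝ) (hb : 0 < b) (n r : ℕ) (hn : 1 ≤ n) (hr : 1 ≤ r) :
    ∑ i ∈ Finset.Icc 1 r, ((n : ℝ) / i) / (b + (n : ℝ) / i) ^ 2
      ≤ ((n : ℝ) / b ^ 2) * Real.log (((n : ℝ) + ((r : ℝ) + 1) * b) / n) + 1 / (2 * b) := by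
  have hn' : (0 : ℝ) < n := by exact_mod_cast hn
  calc ∑ i ∈ Icc 1 r, ((n : ℝ) / i) / (b + (n : ℝ) / i) ^ 2
      ≤ ∑ i ∈ Icc 1 r,
          (decayPotential b n ((i + 1 : ℕ) : ℝ) - decayPotential b n (i : ℝ)) := by
        refine sum_le_sum fun i hi ↦ ?_
        have hi : (0 : ℝ) < i := by exact_mod_cast (mem_Icc.1 hi).1
        exact_mod_cast summand_le_decayPotential_sub hb hn'.le hi
    _ = decayPotential b n ((r + 1 : ℕ) : ℝ) - decayPotential b n ((1 : ℕ) : ℝ) :=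
        sum_Icc_sub hr fun i : ℕ ↦ decayPotential b n i
    _ ≤ _ := by
        push_cast
        exact decayPotential_sub_decayPotential_one_le hb hn' (by positivity)
end

section
/- Polynomial-decay bound (Proposition 1, part 2, with the additive correction needed to make it precise): for every real b > 0, every real a > 1/2, and all integers n ≥ 1 and r ≥ 1, Σ_{i=1}^{r} (n·i^{−2a})/(b + n·i^{−2a})² ≤ (C_a/(2ab))·(n/b)^{1/(2a)} + 1/(2b), where C_a := ∫_0^∞ u^{1/(2a)}/(1+u)² du, which is finite since 2a > 1. -/
/-!
With `X = (n / b) ^ (1 / (2 a))` and `ψ v = v / (1 + v) ^ 2`, the summand at `x > 0` equals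
`ψ ((x / X) ^ (2 a)) / b`. Since `ψ` increases on `[0, 1]`, decreases on `[1, ∞)` and is at
most `1 / 4`, the summand is unimodal with peak at `X` and bounded by `1 / (4 b)`. For a
unimodal function, comparing each term with the integral over the adjacent unit interval on
the side away from the peak bounds the sum by the integral, except for the two terms at `⌊X⌋`
and `⌊X⌋ + 1`. The substitutions `x = X t` and `t = u ^ (1 / (2 a))` turn the integral into
`X / (2 a b) · ∫₀^∞ u ^ (1 / (2 a)) / (1 + u) ^ 2 du`; it converges because `2 a > 1`.
-/

open MeasureTheory Set Real

theorem div_add_sq_le_one_div_four_mul {b : ℝ} (hb : 0 < b) (s : ℝ) :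
    s / (b + s) ^ 2 ≤ 1 / (4 * b) := by
  rcases eq_or_ne (b + s) 0 with hbs | hbs
  · rw [hbs, zero_pow two_ne_zero, div_zero]
    positivity
  rw [div_le_div_iff₀ (by positivity) (by positivity)]
  nlinarith [sq_nonneg (b - s)]

theorem monotoneOn_div_one_add_sq : MonotoneOn (fun v : ℝ => v / (1 + v) ^ 2) (Icc 0 1) := by
  intro v hv w hw hvw
  dsimp only
  rw [div_le_div_iff₀ (by nlinarith [hv.1]) (by nlinarith [hw.1])]
  nlinarith [mul_le_mul hv.2 hw.2 hw.1 zero_le_one, hv.1]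

theorem antitoneOn_div_one_add_sq : AntitoneOn (fun v : ℝ => v / (1 + v) ^ 2) (Ici 1) := by
  intro v hv w hw hvw
  dsimp only
  rw [mem_Ici] at hv hw
  rw [div_le_div_iff₀ (by nlinarith) (by nlinarith)]
  nlinarith [mul_le_mul hv hw zero_le_one (by linarith : (0:ℝ) ≤ v)]

theorem integral_comp_rpow_Ioi_eq_integral_rpow_smul {E : Type*} [NormedAddCommGroup E]
    [NormedSpace ℝ E] (g : ℝ → E) {p : ℝ} (hp : 0 < p) :
    ∫ t in Ioi 0, g (t ^ p) = ∫ u in Ioi 0, (1 / p * u ^ (1 / p - 1)) • g u := by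
  rw [← integral_comp_rpow_Ioi_of_pos (g := fun t => g (t ^ p)) (one_div_pos.2 hp)]
  refine setIntegral_congr_fun measurableSet_Ioi fun u hu => ?_
  rw [one_div, rpow_inv_rpow (le_of_lt hu) hp.ne']

theorem integral_comp_div_Ioi_zero {E : Type*} [NormedAddCommGroup E] [NormedSpace ℝ E]
    (g : ℝ → E) {X : ℝ} (hX : 0 < X) :
    ∫ x in Ioi 0, g (x / X) = X • ∫ t in Ioi 0, g t := by
  simpa [div_eq_mul_inv] using integral_comp_mul_right_Ioi g 0 (inv_pos.2 hX)

theorem MonotoneOn.sum_Icc_le_setIntegral_Ioc_add {f : ℝ → ℝ} {m : ℕ} (hm : 1 ≤ m)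
    (hf : MonotoneOn f (Icc 1 m)) :
    ∑ i ∈ Finset.Icc 1 m, f i ≤ (∫ x in Ioc 1 (m : ℝ), f x) + f m := by
  have hsum := MonotoneOn.sum_le_integral_Ico hm (by simpa using hf)
  rw [intervalIntegral.integral_of_le (by exact_mod_cast hm)] at hsum
  rw [← Finset.Ico_add_one_right_eq_Icc, Finset.sum_Ico_succ_top hm]
  simpa using hsum

theorem AntitoneOn.sum_Ioc_le_setIntegral_Ioc {f : ℝ → ℝ} {m n : ℕ} (hmn : m ≤ n)
    (hf : AntitoneOn f (Icc m n)) :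
    ∑ i ∈ Finset.Ioc m n, f i ≤ ∫ x in Ioc (m : ℝ) n, f x := by
  have hsum := hf.sum_le_integral_Ico hmn
  rw [intervalIntegral.integral_of_le (by exact_mod_cast hmn)] at hsum
  rwa [← Finset.Icc_add_one_left_eq_Ioc, ← Finset.Ico_add_one_right_eq_Icc,
    ← Finset.sum_Ico_add' (fun i : ℕ => f i)]

theorem sum_Icc_le_setIntegral_Ioi_add_of_unimodal {f : ℝ → ℝ} {X M : ℝ}
    (hf : IntegrableOn f (Ioi 0)) (hf_nonneg : ∀ x, 0 < x → 0 ≤ f x)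
    (hf_le : ∀ x, 0 < x → f x ≤ M) (hmono : MonotoneOn f (Ioc 0 X))
    (hanti : AntitoneOn f (Ici X)) (r : ℕ) :
    ∑ i ∈ Finset.Icc 1 r, f i ≤ (∫ x in Ioi 0, f x) + 2 * M := by
  set m := ⌊X⌋₊
  set R := max r (m + 1)
  have hmR : m + 1 ≤ R := le_max_right r (m + 1)
  have hextend : ∑ i ∈ Finset.Icc 1 r, f i ≤ ∑ i ∈ Finset.Icc 1 R, f i :=
    Finset.sum_le_sum_of_subset_of_nonneg (Finset.Icc_subset_Icc_right (le_max_left r _))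
      fun i hi _ => hf_nonneg i (by rw [Finset.mem_Icc] at hi; exact_mod_cast hi.1)
  have hsplit : ∑ i ∈ Finset.Icc 1 R, f i
      = ∑ i ∈ Finset.Icc 1 m, f i + f (m + 1 : ℕ) + ∑ i ∈ Finset.Ioc (m + 1) R, f i := by
    have hIcc (k : ℕ) : Finset.Icc 1 k = Finset.Ioc 0 k := Finset.Icc_add_one_left_eq_Ioc 0 k
    rw [hIcc, hIcc, ← Finset.sum_Ioc_succ_top (Nat.zero_le m),
      Finset.sum_Ioc_consecutive _ (Nat.zero_le (m + 1)) hmR]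
  have hhead : ∑ i ∈ Finset.Icc 1 m, f i ≤ (∫ x in Ioc 1 (m : ℝ), f x) + M := by
    rcases Nat.eq_zero_or_pos m with hm_zero | hm_pos
    · simpa [hm_zero] using (hf_nonneg 1 one_pos).trans (hf_le 1 one_pos)
    · have hmX : (m : ℝ) ≤ X := Nat.floor_le (by linarith [Nat.floor_pos.mp hm_pos])
      have hmono_sum := (hmono.mono fun x hx => ⟨by linarith [hx.1], hx.2.trans hmX⟩)
        |>.sum_Icc_le_setIntegral_Ioc_add hm_pos
      linarith [hf_le m (by positivity)]
  have htail : ∑ i ∈ Finset.Ioc (m + 1) R, f i ≤ ∫ x in Ioc ((m + 1 : ℕ) : ℝ) R, f x :=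
    (hanti.mono fun x hx => (Nat.lt_floor_add_one X).le.trans (by exact_mod_cast hx.1))
      |>.sum_Ioc_le_setIntegral_Ioc hmR
  have hintegrals : (∫ x in Ioc 1 (m : ℝ), f x) + ∫ x in Ioc ((m + 1 : ℕ) : ℝ) R, f x
      ≤ ∫ x in Ioi 0, f x := by
    have hsub : Ioc 1 (m : ℝ) ∪ Ioc ((m + 1 : ℕ) : ℝ) R ⊆ Ioi 0 := by
      rintro x (hx | hx)
      · exact one_pos.trans hx.1
      · exact (Nat.cast_pos.2 m.succ_pos).trans hx.1
    rw [← setIntegral_union _ measurableSet_Ioc (hf.mono_set (subset_union_left.trans hsub))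
      (hf.mono_set (subset_union_right.trans hsub))]
    · exact setIntegral_mono_set hf ((ae_restrict_mem measurableSet_Ioi).mono hf_nonneg)
        hsub.eventuallyLE
    · exact disjoint_left.2 fun x hx hx' => by push_cast at hx'; linarith [hx.2, hx'.1]
  linarith [hf_le (m + 1 : ℕ) (by positivity)]

noncomputable def polyDecayTerm (b c p x : ℝ) : ℝ := c * x ^ (-p) / (b + c * x ^ (-p)) ^ 2

section

variable {b c p : ℝ}

theorem polyDecayTerm_nonneg (hc : 0 ≤ c) {x : ℝ} (hx : 0 ≤ x) :
    0 ≤ polyDecayTerm b c p x := by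
  unfold polyDecayTerm
  positivity

theorem polyDecayTerm_le (hb : 0 < b) (x : ℝ) : polyDecayTerm b c p x ≤ 1 / (4 * b) :=
  div_add_sq_le_one_div_four_mul hb _

theorem polyDecayTerm_le_div_sq (hb : 0 < b) (hc : 0 ≤ c) {x : ℝ} (hx : 0 ≤ x) :
    polyDecayTerm b c p x ≤ c * x ^ (-p) / b ^ 2 := by
  have hs : 0 ≤ c * x ^ (-p) := by positivity
  exact div_le_div_of_nonneg_left hs (by positivity)
    (pow_le_pow_left₀ hb.le (le_add_of_nonneg_right hs) 2)

theorem polyDecayTerm_eq (hb : 0 < b) (hc : 0 < c) (hp : p ≠ 0) {x : ℝ} (hx : 0 < x) :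
    polyDecayTerm b c p x
      = (x / (c / b) ^ (1 / p)) ^ p / (1 + (x / (c / b) ^ (1 / p)) ^ p) ^ 2 / b := by
  have hxp : 0 < x ^ p := by positivity
  rw [div_rpow hx.le (by positivity), one_div, rpow_inv_rpow (by positivity) hp, polyDecayTerm,
    rpow_neg hx.le]
  field_simp
  ring

theorem monotoneOn_polyDecayTerm (hb : 0 < b) (hc : 0 < c) (hp : 0 < p) :
    MonotoneOn (polyDecayTerm b c p) (Ioc 0 ((c / b) ^ (1 / p))) := by
  intro x hx y hy hxy
  have hX : 0 < (c / b) ^ (1 / p) := by positivity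
  have hx0 : 0 < x := hx.1
  have hy0 : 0 < y := hy.1
  rw [polyDecayTerm_eq hb hc hp.ne' hx0, polyDecayTerm_eq hb hc hp.ne' hy0]
  gcongr ?_ / b
  refine monotoneOn_div_one_add_sq ⟨by positivity, ?_⟩ ⟨by positivity, ?_⟩ (by gcongr)
  · exact rpow_le_one (by positivity) ((div_le_one hX).2 hx.2) hp.le
  · exact rpow_le_one (by positivity) ((div_le_one hX).2 hy.2) hp.le

theorem antitoneOn_polyDecayTerm (hb : 0 < b) (hc : 0 < c) (hp : 0 < p) :
    AntitoneOn (polyDecayTerm b c p) (Ici ((c / b) ^ (1 / p))) := by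
  intro x hx y hy hxy
  have hX : 0 < (c / b) ^ (1 / p) := by positivity
  have hx0 : 0 < x := hX.trans_le hx
  rw [polyDecayTerm_eq hb hc hp.ne' hx0, polyDecayTerm_eq hb hc hp.ne' (hx0.trans_le hxy)]
  gcongr ?_ / b
  refine antitoneOn_div_one_add_sq ?_ ?_ (by gcongr)
  · exact one_le_rpow ((one_le_div hX).2 hx) hp.le
  · exact one_le_rpow ((one_le_div hX).2 hy) hp.le

theorem integrableOn_polyDecayTerm (hb : 0 < b) (hc : 0 ≤ c) (hp : 1 < p) :
    IntegrableOn (polyDecayTerm b c p) (Ioi 0) := by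
  have hmeas : Measurable (polyDecayTerm b c p) := by unfold polyDecayTerm; fun_prop
  have hnear : IntegrableOn (polyDecayTerm b c p) (Ioc 0 1) := by
    refine Integrable.mono' (integrable_const (1 / (4 * b))) hmeas.aestronglyMeasurable ?_
    filter_upwards [ae_restrict_mem measurableSet_Ioc] with x hx
    rw [norm_of_nonneg (polyDecayTerm_nonneg hc hx.1.le)]
    exact polyDecayTerm_le hb x
  have hfar : IntegrableOn (polyDecayTerm b c p) (Ioi 1) := by
    refine Integrable.mono' ((integrableOn_Ioi_rpow_of_lt (neg_lt_neg hp) one_pos).const_mul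
      (c / b ^ 2)) hmeas.aestronglyMeasurable ?_
    filter_upwards [ae_restrict_mem measurableSet_Ioi] with x hx
    have hx0 : 0 ≤ x := zero_le_one.trans hx.le
    rw [norm_of_nonneg (polyDecayTerm_nonneg hc hx0), mul_comm_div, ← mul_div_assoc]
    exact polyDecayTerm_le_div_sq hb hc hx0
  simpa using hnear.union hfar

theorem integral_polyDecayTerm (hb : 0 < b) (hc : 0 < c) (hp : 0 < p) :
    ∫ x in Ioi 0, polyDecayTerm b c p x
      = (∫ u in Ioi (0 : ℝ), u ^ (1 / p) / (1 + u) ^ 2) / (p * b) * (c / b) ^ (1 / p) := by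
  set X := (c / b) ^ (1 / p)
  have hX : 0 < X := by positivity
  calc ∫ x in Ioi 0, polyDecayTerm b c p x
      = ∫ x in Ioi 0, (x / X) ^ p / (1 + (x / X) ^ p) ^ 2 / b :=
        setIntegral_congr_fun measurableSet_Ioi fun x hx => polyDecayTerm_eq hb hc hp.ne' hx
    _ = X * (∫ t in Ioi 0, t ^ p / (1 + t ^ p) ^ 2) / b := by
        rw [integral_div, integral_comp_div_Ioi_zero (fun t => t ^ p / (1 + t ^ p) ^ 2) hX,
          smul_eq_mul]
    _ = X * (1 / p * ∫ u in Ioi (0 : ℝ), u ^ (1 / p) / (1 + u) ^ 2) / b := by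
        congr 2
        rw [integral_comp_rpow_Ioi_eq_integral_rpow_smul (fun u => u / (1 + u) ^ 2) hp,
          ← integral_const_mul]
        refine setIntegral_congr_fun measurableSet_Ioi fun u hu => ?_
        have hu : 0 < u := hu
        rw [smul_eq_mul, rpow_sub hu, rpow_one]
        field_simp
    _ = _ := by ring

end

theorem polynomial_decay_bound_general (b a : ℝ) (hb : 0 < b) (ha : 1 / 2 < a)
    (n r : ℕ) (hn : 1 ≤ n) :
    ∑ i ∈ Finset.Icc 1 r, ((n : ℝ) * (i : ℝ) ^ (-(2 * a))) / (b + (n : ℝ) * (i : ℝ) ^ (-(2 * a))) ^ 2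
      ≤ ((∫ u in Set.Ioi (0 : ℝ), u ^ (1 / (2 * a)) / (1 + u) ^ 2) / (2 * a * b)) *
          ((n : ℝ) / b) ^ (1 / (2 * a)) + 1 / (2 * b) := by
  have hn0 : (0 : ℝ) < n := by exact_mod_cast hn
  have hp : 0 < 2 * a := by linarith
  have hsum := sum_Icc_le_setIntegral_Ioi_add_of_unimodal
    (integrableOn_polyDecayTerm hb hn0.le (by linarith))
    (fun x hx => polyDecayTerm_nonneg hn0.le hx.le) (fun x _ => polyDecayTerm_le hb x)
    (monotoneOn_polyDecayTerm hb hn0 hp) (antitoneOn_polyDecayTerm hb hn0 hp) r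
  rw [integral_polyDecayTerm hb hn0 hp] at hsum
  exact hsum.trans_eq (by ring)

/-- Polynomial-decay bound (Proposition 1, part 2, with additive correction):
for every `b > 0`, `a > 1/2` and integers `n, r ≥ 1`,
`∑_{i=1}^{r} (n·i^{−2a})/(b + n·i^{−2a})² ≤ (C_a/(2ab))·(n/b)^{1/(2a)} + 1/(2b)`,
where `C_a = ∫_0^∞ u^{1/(2a)}/(1+u)² du`. -/
theorem polynomial_decay_bound (b a : ℝ) (hb : 0 < b) (ha : 1 / 2 < a)
    (n r : ℕ) (hn : 1 ≤ n) (hr : 1 ≤ r) :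
    ∑ i ∈ Finset.Icc 1 r, ((n : ℝ) * (i : ℝ) ^ (-(2 * a))) / (b + (n : ℝ) * (i : ℝ) ^ (-(2 * a))) ^ 2
      ≤ ((∫ u in Set.Ioi (0 : ℝ), u ^ (1 / (2 * a)) / (1 + u) ^ 2) / (2 * a * b)) *
          ((n : ℝ) / b) ^ (1 / (2 * a)) + 1 / (2 * b) :=
  polynomial_decay_bound_general b a hb ha n r hn
end
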